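/- In the oblivious model, for every m, k ∈ {1,2} and every t ∈ ℕ, E[h_{mk}(t+1)] ≤ 1 + (1 − b_k) · ∑_{j=0}^{t} (1 − b_k r_k)^j + ∑_{n∈{1,2}} b_k^{(n)} (1 − r_k) · ∑_{j=0}^{t} (1 − r_k ζ_{nk})^j. -/

import Mathlib

/-- Index type for the family of primitive random variables:
`inl (m, k, t)` indexes the request variable of user `m`, CP `k`, time `t`;
`inr (n, k, t)` indexes the command indicator of eRRH `n`, CP `k`, time `t`. -/
abbrev FranIdx : Type := (Fin 2 × Fin 2 × ℕ) ⊕ (Fin 2 × Fin 2 × ℕ)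

/-- Codomain of each primitive random variable. -/
def FranType : FranIdx → Type
  | .inl _ => Fin 3
  | .inr _ => Bool

instance FranType.instMeasurableSpace : ∀ i, MeasurableSpace (FranType i)
  | .inl _ => inferInstanceAs (MeasurableSpace (Fin 3))
  | .inr _ => inferInstanceAs (MeasurableSpace Bool)

/-- Oblivious 2-user/2-eRRH/2-CP F-RAN model. -/
structure ObliviousFRAN where
  /-- sample space -/
  Ω : Type
  [mΩ : MeasurableSpace Ω]
  μ : MeasureTheory.Measure Ω
  isProb : MeasureTheory.IsProbabilityMeasure μ
  /-- request rates: `bsplit k n = b_k^{(n+1)}` -/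
  bsplit : Fin 2 → Fin 2 → ℝ
  bsplit_nonneg : ∀ k n, 0 ≤ bsplit k n
  bsum_le_one : ∀ k, bsplit k 0 + bsplit k 1 ≤ 1
  /-- command rates -/
  r : Fin 2 → ℝ
  r_nonneg : ∀ k, 0 ≤ r k
  r_le_one : ∀ k, r k ≤ 1
  /-- request variables: value `0` = no request, value `n.succ` = request sent to eRRH `n` -/
  R : Fin 2 → Fin 2 → ℕ → Ω → Fin 3
  /-- command indicators -/
  γ : Fin 2 → Fin 2 → ℕ → Ω → Bool
  R_meas : ∀ m k t, Measurable (R m k t)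
  γ_meas : ∀ n k t, Measurable (γ n k t)
  R_law : ∀ m k t (n : Fin 2), μ {ω | R m k t ω = n.succ} = ENNReal.ofReal (bsplit k n)
  R_law0 : ∀ m k t, μ {ω | R m k t ω = 0} = ENNReal.ofReal (1 - (bsplit k 0 + bsplit k 1))
  γ_law : ∀ n k t, μ {ω | γ n k t ω = true} = ENNReal.ofReal (r k)
  /-- all the primitive random variables are mutually independent -/
  indep : ProbabilityTheory.iIndepFun (m := fun i => FranType.instMeasurableSpace i)
      (fun i => Sum.rec (motive := fun j => Ω → FranType j)
        (fun p => R p.1 p.2.1 p.2.2) (fun p => γ p.1 p.2.1 p.2.2) i) μ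

attribute [instance] ObliviousFRAN.mΩ

open MeasureTheory ProbabilityTheory Filter

namespace ObliviousFRAN

variable (M : ObliviousFRAN)

/-- AoI of CP `k` at eRRH `n`. -/
def g (n k : Fin 2) : ℕ → M.Ω → ℕ
  | 0 => fun _ => 1
  | t + 1 => fun ω =>
      if M.γ n k t ω = true ∧ ∃ m : Fin 2, M.R m k t ω = n.succ then 1
      else g n k t ω + 1

/-- AoI of CP `k` at user `m`. -/
def h (m k : Fin 2) : ℕ → M.Ω → ℕ
  | 0 => fun _ => 1
  | t + 1 => fun ω =>
      if M.R m k t ω = 0 then h m k t ω + 1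
      else if M.R m k t ω = 1 then
        (if M.γ 0 k t ω = true then 1 else min (h m k t ω) (M.g 0 k t ω) + 1)
      else
        (if M.γ 1 k t ω = true then 1 else min (h m k t ω) (M.g 1 k t ω) + 1)

/-- Expected AoI of CP `k` at eRRH `n` at time `t`. -/
noncomputable def Eg (n k : Fin 2) (t : ℕ) : ℝ := ∫ ω, (M.g n k t ω : ℝ) ∂M.μ

/-- Expected AoI of CP `k` at user `m` at time `t`. -/
noncomputable def Eh (m k : Fin 2) (t : ℕ) : ℝ := ∫ ω, (M.h m k t ω : ℝ) ∂M.μ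

/-- Total request rate of a user for CP `k`: `b_k = b_k^{(1)} + b_k^{(2)}`. -/
def bk (k : Fin 2) : ℝ := M.bsplit k 0 + M.bsplit k 1

/-- `ζ_{nk} = 1 - (1 - b_k^{(n)})^2`. -/
def ζ (n k : Fin 2) : ℝ := 1 - (1 - M.bsplit k n) ^ 2

end ObliviousFRAN

/-!
The primitive variables at time `t` are independent of those at earlier times, which determine
`g(t)` and `h(t)`. Hence `E[1_A X(t)] = P(A) E[X(t)]` for every event `A` determined at time `t`
and `X ∈ {g, h}`.
Writing the recursions as `g_n(t+1) = 1 + 1_{Aᶜ} g_n(t)` with `A = {γ_n(t) = 1, some user asks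
eRRH n}` (so `P(A) = r ζ_n`), `h(t+1) ≤ 1 + 1_{no fresh delivery} h(t)` and
`h(t+1) ≤ 1 + 1_{R(t)=0} h(t) + ∑_n 1_{R(t)=n, γ_n(t)=0} g_n(t)`, taking expectations gives
`E g_n(t+1) = 1 + (1 - r ζ_n) E g_n(t)` and `E h(t+1) ≤ 1 + (1 - b r) E h(t)`, which unroll to
the geometric sums, and the last one, fed with these two bounds, is the claim.
-/

open Finset

lemma le_geom_sum_of_le_one_add_mul {a : ℕ → ℝ} {q : ℝ} (hq : 0 ≤ q) (h0 : a 0 ≤ 1)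
    (hrec : ∀ t, a (t + 1) ≤ 1 + q * a t) (t : ℕ) :
    a t ≤ ∑ j ∈ range (t + 1), q ^ j := by
  induction t with
  | zero => simpa using h0
  | succ t ih =>
    calc a (t + 1) ≤ 1 + q * a t := hrec t
      _ ≤ 1 + q * ∑ j ∈ range (t + 1), q ^ j := by gcongr
      _ = ∑ j ∈ range (t + 1 + 1), q ^ j := by rw [geom_sum_succ (n := t + 1)]; ring

lemma integrable_natCast_of_le {Ω : Type*} [MeasurableSpace Ω] {μ : Measure Ω}
    [IsFiniteMeasure μ] {X : Ω → ℕ} (hX : Measurable X) {C : ℕ} (hC : ∀ ω, X ω ≤ C) :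
    Integrable (fun ω => (X ω : ℝ)) μ :=
  Integrable.of_bound (measurable_from_nat.comp hX).aestronglyMeasurable C
    (.of_forall fun ω => by simpa using hC ω)

def FranIdx.time : FranIdx → ℕ := Sum.elim (·.2.2) (·.2.2)

attribute [instance] ObliviousFRAN.isProb

namespace ObliviousFRAN

variable (M : ObliviousFRAN)

-- `M.indep` is stated for exactly this family.
def prim (i : FranIdx) : M.Ω → FranType i :=
  Sum.rec (motive := fun j => M.Ω → FranType j)
    (fun p => M.R p.1 p.2.1 p.2.2) (fun p => M.γ p.1 p.2.1 p.2.2) i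

lemma measurable_prim : ∀ i, Measurable (M.prim i)
  | .inl p => M.R_meas p.1 p.2.1 p.2.2
  | .inr p => M.γ_meas p.1 p.2.1 p.2.2

abbrev generated (S : Set FranIdx) : MeasurableSpace M.Ω :=
  ⨆ i ∈ S, (FranType.instMeasurableSpace i).comap (M.prim i)

lemma generated_le (S : Set FranIdx) : M.generated S ≤ M.mΩ :=
  iSup₂_le fun i _ => (M.measurable_prim i).comap_le

lemma generated_mono {S T : Set FranIdx} (hST : S ⊆ T) : M.generated S ≤ M.generated T :=
  biSup_mono hST

lemma indep_generated {S T : Set FranIdx} (hST : Disjoint S T) :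
    Indep (M.generated S) (M.generated T) M.μ :=
  indep_iSup_of_disjoint (fun i => (M.measurable_prim i).comap_le)
    ((iIndepFun_iff_iIndep _ _ _).1 M.indep) hST

lemma measurable_prim_generated {S : Set FranIdx} {i : FranIdx} (hi : i ∈ S) :
    Measurable[M.generated S] (M.prim i) :=
  Measurable.of_comap_le
    (le_iSup₂ (f := fun i _ => (FranType.instMeasurableSpace i).comap (M.prim i)) i hi)

lemma measurableSet_R_eq_generated {S : Set FranIdx} {m k : Fin 2} {t : ℕ}
    (h : .inl (m, k, t) ∈ S) (v : Fin 3) :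
    MeasurableSet[M.generated S] {ω | M.R m k t ω = v} :=
  M.measurable_prim_generated h (measurableSet_singleton v)

lemma measurableSet_γ_eq_generated {S : Set FranIdx} {n k : Fin 2} {t : ℕ}
    (h : .inr (n, k, t) ∈ S) (b : Bool) :
    MeasurableSet[M.generated S] {ω | M.γ n k t ω = b} :=
  M.measurable_prim_generated h (measurableSet_singleton b)

lemma measureReal_inter_of_disjoint {S T : Set FranIdx} (hST : Disjoint S T) {A B : Set M.Ω}
    (hA : MeasurableSet[M.generated S] A) (hB : MeasurableSet[M.generated T] B) :
    M.μ.real (A ∩ B) = M.μ.real A * M.μ.real B := by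
  simp only [measureReal_def, (Indep_iff _ _ _).1 (M.indep_generated hST) A B hA hB,
    ENNReal.toReal_mul]

abbrev past (t : ℕ) : MeasurableSpace M.Ω := M.generated (FranIdx.time ⁻¹' Set.Iio t)

abbrev now (t : ℕ) : MeasurableSpace M.Ω := M.generated (FranIdx.time ⁻¹' {t})

lemma past_mono {s t : ℕ} (h : s ≤ t) : M.past s ≤ M.past t :=
  M.generated_mono (Set.preimage_mono (Set.Iio_subset_Iio h))

lemma integral_indicator_eq_measureReal_mul {t : ℕ} {A : Set M.Ω}
    (hA : MeasurableSet[M.now t] A) {X : M.Ω → ℕ} (hX : Measurable[M.past t] X) :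
    ∫ ω, A.indicator (fun ω => (X ω : ℝ)) ω ∂M.μ
      = M.μ.real A * ∫ ω, (X ω : ℝ) ∂M.μ := by
  have hdisj : Disjoint (FranIdx.time ⁻¹' {t}) (FranIdx.time ⁻¹' Set.Iio t) :=
    Disjoint.preimage _ (Set.disjoint_singleton_left.2 (lt_irrefl t))
  rw [integral_indicator (M.generated_le _ A hA)]
  exact Indep.setIntegral_eq_mul (M.generated_le _)
    (indep_of_indep_of_le_right (M.indep_generated hdisj) hX.comap_le)
    (hX.mono (M.generated_le _) le_rfl).aemeasurable hA
    (measurable_from_nat (f := ((↑) : ℕ → ℝ))).aestronglyMeasurable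

def requestCommand (m n k : Fin 2) (t : ℕ) (b : Bool) : Set M.Ω :=
  {ω | M.R m k t ω = n.succ ∧ M.γ n k t ω = b}

def refresh (n k : Fin 2) (t : ℕ) : Set M.Ω :=
  {ω | M.γ n k t ω = true ∧ ∃ m, M.R m k t ω = n.succ}

section Now

variable (m n k : Fin 2) (t : ℕ)

-- Naming the implicit arguments spares a very slow unification of `rfl` with metavariables.
lemma measurableSet_R_eq_now (v : Fin 3) : MeasurableSet[M.now t] {ω | M.R m k t ω = v} :=
  M.measurableSet_R_eq_generated (S := FranIdx.time ⁻¹' {t}) (m := m) (k := k) (t := t) rfl v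

lemma measurableSet_γ_eq_now (b : Bool) : MeasurableSet[M.now t] {ω | M.γ n k t ω = b} :=
  M.measurableSet_γ_eq_generated (S := FranIdx.time ⁻¹' {t}) (n := n) (k := k) (t := t) rfl b

lemma measurableSet_requestCommand_now (b : Bool) :
    MeasurableSet[M.now t] (M.requestCommand m n k t b) := by
  rw [requestCommand, Set.ofPred_and]
  exact (M.measurableSet_R_eq_now m k t _).inter (M.measurableSet_γ_eq_now n k t b)

lemma measurableSet_refresh_now : MeasurableSet[M.now t] (M.refresh n k t) := by
  rw [refresh, Set.ofPred_and, Set.ofPred_exists]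
  exact (M.measurableSet_γ_eq_now n k t _).inter
    (.iUnion fun m => M.measurableSet_R_eq_now m k t _)

end Now

lemma measurable_R_past {m k : Fin 2} {s t : ℕ} (h : s < t) :
    Measurable[M.past t] (M.R m k s) :=
  M.measurable_prim_generated (i := .inl (m, k, s)) h

lemma measurable_γ_past {n k : Fin 2} {s t : ℕ} (h : s < t) :
    Measurable[M.past t] (M.γ n k s) :=
  M.measurable_prim_generated (i := .inr (n, k, s)) h

lemma measurable_g_past (n k : Fin 2) (t : ℕ) : Measurable[M.past t] (M.g n k t) := by
  induction t with
  | zero => exact measurable_const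
  | succ t ih =>
    have hγ := M.measurable_γ_past (n := n) (k := k) (Nat.lt_succ_self t)
    have hR (m : Fin 2) := M.measurable_R_past (m := m) (k := k) (Nat.lt_succ_self t)
    refine Measurable.ite ?_ measurable_const
      (measurable_from_top.comp (ih.mono (M.past_mono t.le_succ) le_rfl))
    rw [Set.ofPred_and, Set.ofPred_exists]
    exact (hγ (measurableSet_singleton true)).inter
      (.iUnion fun m => hR m (measurableSet_singleton _))

lemma measurable_h_past (m k : Fin 2) (t : ℕ) : Measurable[M.past t] (M.h m k t) := by
  induction t with
  | zero => exact measurable_const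
  | succ t ih =>
    have hle := M.past_mono t.le_succ
    have hγ (n : Fin 2) := M.measurable_γ_past (n := n) (k := k) (Nat.lt_succ_self t)
    have hR := M.measurable_R_past (m := m) (k := k) (Nat.lt_succ_self t)
    have hmin (n : Fin 2) :
        Measurable[M.past (t + 1)] fun ω => min (M.h m k t ω) (M.g n k t ω) + 1 :=
      (measurable_of_countable fun p : ℕ × ℕ => min p.1 p.2 + 1).comp
        ((ih.mono hle le_rfl).prodMk ((M.measurable_g_past n k t).mono hle le_rfl))
    refine Measurable.ite (hR (measurableSet_singleton _))
      (measurable_from_top.comp (ih.mono hle le_rfl)) ?_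
    refine Measurable.ite (hR (measurableSet_singleton _)) ?_ ?_ <;>
      exact Measurable.ite ((hγ _) (measurableSet_singleton _)) measurable_const (hmin _)

lemma g_le (n k : Fin 2) (t : ℕ) (ω : M.Ω) : M.g n k t ω ≤ t + 1 := by
  induction t with
  | zero => exact le_rfl
  | succ t ih =>
    simp only [g]
    split_ifs <;> omega

lemma h_le (m k : Fin 2) (t : ℕ) (ω : M.Ω) : M.h m k t ω ≤ t + 1 := by
  induction t with
  | zero => exact le_rfl
  | succ t ih =>
    simp only [h]
    split_ifs <;> omega

lemma integrable_g (n k : Fin 2) (t : ℕ) : Integrable (fun ω => (M.g n k t ω : ℝ)) M.μ :=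
  integrable_natCast_of_le ((M.measurable_g_past n k t).mono (M.generated_le _) le_rfl)
    (M.g_le n k t)

lemma integrable_h (m k : Fin 2) (t : ℕ) : Integrable (fun ω => (M.h m k t ω : ℝ)) M.μ :=
  integrable_natCast_of_le ((M.measurable_h_past m k t).mono (M.generated_le _) le_rfl)
    (M.h_le m k t)

section Pointwise

variable {M} (m n k : Fin 2) (t : ℕ) (ω : M.Ω)

lemma h_succ_le_sub_indicator :
    (M.h m k (t + 1) ω : ℝ) ≤ 1 + M.h m k t ω - ∑ n : Fin 2,
      (M.requestCommand m n k t true).indicator (fun ω => (M.h m k t ω : ℝ)) ω := by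
  simp only [h, requestCommand, Fin.sum_univ_two, Set.indicator_apply, Set.mem_ofPred_eq]
  obtain hR | hR | hR : M.R m k t ω = 0 ∨ M.R m k t ω = 1 ∨ M.R m k t ω = 2 := by omega
  all_goals simp [hR]; clear hR; try split_ifs
  all_goals simp_all [add_comm _ (1 : ℝ)]

lemma h_succ_le_add_indicator :
    (M.h m k (t + 1) ω : ℝ)
      ≤ 1 + {ω | M.R m k t ω = 0}.indicator (fun ω => (M.h m k t ω : ℝ)) ω
        + ∑ n : Fin 2,
            (M.requestCommand m n k t false).indicator (fun ω => (M.g n k t ω : ℝ)) ω := by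
  simp only [h, requestCommand, Fin.sum_univ_two, Set.indicator_apply, Set.mem_ofPred_eq]
  obtain hR | hR | hR : M.R m k t ω = 0 ∨ M.R m k t ω = 1 ∨ M.R m k t ω = 2 := by omega
  all_goals simp [hR]; clear hR; try split_ifs
  all_goals simp_all [add_comm _ (1 : ℝ)]

lemma g_succ_eq_add_indicator :
    (M.g n k (t + 1) ω : ℝ)
      = 1 + (M.refresh n k t)ᶜ.indicator (fun ω => (M.g n k t ω : ℝ)) ω := by
  simp only [g, refresh, Set.indicator_apply, Set.mem_compl_iff, Set.mem_ofPred_eq]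
  split_ifs <;> push_cast <;> ring

end Pointwise

section Laws

variable (m n k : Fin 2) (t : ℕ)

lemma measureReal_R_succ : M.μ.real {ω | M.R m k t ω = n.succ} = M.bsplit k n := by
  rw [measureReal_def, M.R_law, ENNReal.toReal_ofReal (M.bsplit_nonneg k n)]

lemma measureReal_R_zero : M.μ.real {ω | M.R m k t ω = 0} = 1 - M.bk k := by
  rw [measureReal_def, M.R_law0, ENNReal.toReal_ofReal (by linarith [M.bsum_le_one k])]
  rfl

lemma measureReal_γ_true : M.μ.real {ω | M.γ n k t ω = true} = M.r k := by
  rw [measureReal_def, M.γ_law, ENNReal.toReal_ofReal (M.r_nonneg k)]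

lemma measureReal_γ_false : M.μ.real {ω | M.γ n k t ω = false} = 1 - M.r k := by
  rw [← M.measureReal_γ_true n k t, ← probReal_compl_eq_one_sub
    (s := {ω | M.γ n k t ω = true}) (M.γ_meas n k t (measurableSet_singleton _))]
  simp [Set.compl_def]

lemma measureReal_requestCommand (b : Bool) :
    M.μ.real (M.requestCommand m n k t b)
      = M.bsplit k n * M.μ.real {ω | M.γ n k t ω = b} := by
  rw [← M.measureReal_R_succ m n k t, requestCommand, Set.ofPred_and]
  exact M.measureReal_inter_of_disjoint (by simp)
    (M.measurableSet_R_eq_generated (S := {.inl (m, k, t)}) rfl _)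
    (M.measurableSet_γ_eq_generated (S := {.inr (n, k, t)}) rfl _)

lemma measureReal_exists_R_eq : M.μ.real {ω | ∃ m, M.R m k t ω = n.succ} = M.ζ n k := by
  have hset : {ω | ∃ m, M.R m k t ω = n.succ}
      = ({ω | M.R 0 k t ω = n.succ}ᶜ ∩ {ω | M.R 1 k t ω = n.succ}ᶜ)ᶜ := by
    ext ω; simp [Fin.exists_fin_two, or_iff_not_and_not]
  have hmeas (m : Fin 2) : MeasurableSet {ω | M.R m k t ω = n.succ} :=
    M.R_meas m k t (measurableSet_singleton _)
  rw [hset, probReal_compl_eq_one_sub ((hmeas 0).compl.inter (hmeas 1).compl),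
    M.measureReal_inter_of_disjoint (by simp)
      (M.measurableSet_R_eq_generated (S := {.inl (0, k, t)}) rfl _).compl
      (M.measurableSet_R_eq_generated (S := {.inl (1, k, t)}) rfl _).compl,
    probReal_compl_eq_one_sub (hmeas 0), probReal_compl_eq_one_sub (hmeas 1),
    M.measureReal_R_succ, M.measureReal_R_succ, ζ, sq]

lemma measureReal_refresh : M.μ.real (M.refresh n k t) = M.r k * M.ζ n k := by
  rw [← M.measureReal_γ_true n k t, ← M.measureReal_exists_R_eq n k t, refresh, Set.ofPred_and]
  refine M.measureReal_inter_of_disjoint (T := Set.range fun m => .inl (m, k, t)) (by simp)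
    (M.measurableSet_γ_eq_generated (S := {.inr (n, k, t)}) rfl _) ?_
  rw [Set.ofPred_exists]
  exact .iUnion fun m => M.measurableSet_R_eq_generated (Set.mem_range_self m) _

end Laws

section Expectation

variable (m n k : Fin 2) (t : ℕ)

lemma Eg_succ : M.Eg n k (t + 1) = 1 + (1 - M.r k * M.ζ n k) * M.Eg n k t := by
  have hA := M.measurableSet_refresh_now n k t
  rw [Eg, integral_congr_ae (.of_forall (g_succ_eq_add_indicator n k t)),
    integral_add (integrable_const 1)
      ((M.integrable_g n k t).indicator (M.generated_le _ _ hA.compl)),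
    M.integral_indicator_eq_measureReal_mul hA.compl (M.measurable_g_past n k t),
    probReal_compl_eq_one_sub (M.generated_le _ _ hA), M.measureReal_refresh]
  simp [Eg]

lemma Eh_succ_le_one_add_mul : M.Eh m k (t + 1) ≤ 1 + (1 - M.bk k * M.r k) * M.Eh m k t := by
  have hE (n : Fin 2) := M.measurableSet_requestCommand_now m n k t true
  have hh := M.integrable_h m k t
  have hint (n : Fin 2) := hh.indicator (M.generated_le _ _ (hE n))
  calc M.Eh m k (t + 1)
      ≤ ∫ ω, (1 + M.h m k t ω - ∑ n : Fin 2, (M.requestCommand m n k t true).indicator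
          (fun ω => (M.h m k t ω : ℝ)) ω) ∂M.μ :=
        integral_mono (M.integrable_h m k (t + 1))
          (((integrable_const 1).add hh).sub (integrable_finsetSum _ fun n _ => hint n))
          (h_succ_le_sub_indicator m k t)
    _ = 1 + (1 - M.bk k * M.r k) * M.Eh m k t := by
      rw [integral_sub (by fun_prop) (by fun_prop), integral_add (by fun_prop) hh,
        integral_finsetSum _ fun n _ => hint n]
      simp only [fun n =>
          M.integral_indicator_eq_measureReal_mul (hE n) (M.measurable_h_past m k t),
        M.measureReal_requestCommand, M.measureReal_γ_true, Fin.sum_univ_two, bk]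
      simp [Eh]
      ring

lemma Eh_succ_le_add_Eg : M.Eh m k (t + 1) ≤ 1 + (1 - M.bk k) * M.Eh m k t
      + ∑ n : Fin 2, M.bsplit k n * (1 - M.r k) * M.Eg n k t := by
  have h0 := M.measurableSet_R_eq_now m k t 0
  have hE (n : Fin 2) := M.measurableSet_requestCommand_now m n k t false
  have hint0 := (M.integrable_h m k t).indicator (M.generated_le _ _ h0)
  have hint (n : Fin 2) := (M.integrable_g n k t).indicator (M.generated_le _ _ (hE n))
  calc M.Eh m k (t + 1)
      ≤ ∫ ω, (1 + {ω | M.R m k t ω = 0}.indicator (fun ω => (M.h m k t ω : ℝ)) ω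
          + ∑ n : Fin 2, (M.requestCommand m n k t false).indicator
            (fun ω => (M.g n k t ω : ℝ)) ω) ∂M.μ :=
        integral_mono (M.integrable_h m k (t + 1))
          (((integrable_const 1).add hint0).add (integrable_finsetSum _ fun n _ => hint n))
          (h_succ_le_add_indicator m k t)
    _ = 1 + (1 - M.bk k) * M.Eh m k t + ∑ n : Fin 2, M.bsplit k n * (1 - M.r k) * M.Eg n k t := by
      rw [integral_add (by fun_prop) (by fun_prop), integral_add (by fun_prop) hint0,
        integral_finsetSum _ fun n _ => hint n,
        M.integral_indicator_eq_measureReal_mul h0 (M.measurable_h_past m k t),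
        M.measureReal_R_zero]
      simp only [fun n =>
          M.integral_indicator_eq_measureReal_mul (hE n) (M.measurable_g_past n k t),
        M.measureReal_requestCommand, M.measureReal_γ_false]
      simp [Eh, Eg]

lemma Eg_le_geom_sum : M.Eg n k t ≤ ∑ j ∈ range (t + 1), (1 - M.r k * M.ζ n k) ^ j := by
  have hrζ : M.r k * M.ζ n k ≤ 1 :=
    calc M.r k * M.ζ n k ≤ M.r k * 1 :=
          mul_le_mul_of_nonneg_left (sub_le_self _ (sq_nonneg _)) (M.r_nonneg k)
      _ ≤ 1 := by simpa using M.r_le_one k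
  exact le_geom_sum_of_le_one_add_mul (sub_nonneg.2 hrζ) (by simp [Eg, g])
    (fun t => (M.Eg_succ n k t).le) t

lemma Eh_le_geom_sum : M.Eh m k t ≤ ∑ j ∈ range (t + 1), (1 - M.bk k * M.r k) ^ j :=
  le_geom_sum_of_le_one_add_mul
    (sub_nonneg.2 (mul_le_one₀ (M.bsum_le_one k) (M.r_nonneg k) (M.r_le_one k)))
    (by simp [Eh, h]) (M.Eh_succ_le_one_add_mul m k) t

end Expectation

end ObliviousFRAN

/-- the second recursive upper bound on `E[h_{mk}(t+1)]`. -/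
theorem stmt3 (M : ObliviousFRAN) (m k : Fin 2) (t : ℕ) :
    M.Eh m k (t + 1) ≤
      1 + (1 - M.bk k) * ∑ j ∈ Finset.range (t + 1), (1 - M.bk k * M.r k) ^ j
        + ∑ n : Fin 2, M.bsplit k n * (1 - M.r k) *
            ∑ j ∈ Finset.range (t + 1), (1 - M.r k * M.ζ n k) ^ j := by
  have hb : 0 ≤ 1 - M.bk k := sub_nonneg.2 (M.bsum_le_one k)
  calc M.Eh m k (t + 1)
      ≤ 1 + (1 - M.bk k) * M.Eh m k t + ∑ n : Fin 2, M.bsplit k n * (1 - M.r k) * M.Eg n k t :=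
        M.Eh_succ_le_add_Eg m k t
    _ ≤ _ := by
      gcongr with n
      · exact M.Eh_le_geom_sum m k t
      · exact mul_nonneg (M.bsplit_nonneg k n) (sub_nonneg.2 (M.r_le_one k))
      · exact M.Eg_le_geom_sum n k t
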